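/- arXiv:2602.22577 — 3 statements merged into one kernel-verified Lean document; each statement's English description precedes it below -/
import Mathlib

section
/- Let A ∈ ℝ^{n×n}, B ∈ ℝ^{n×m}, Q ∈ ℝ^{n×n} symmetric, R ∈ ℝ^{m×m} symmetric positive definite, and W ∈ ℝ^{n×n} symmetric. Suppose P* ∈ ℝ^{n×n} is symmetric positive semidefinite, R + BᵀP*B is invertible, P* satisfies the discrete-time algebraic Riccati equation P* = AᵀP*A + Q − AᵀP*B(R+BᵀP*B)⁻¹BᵀP*A, and set K* = −(R+BᵀP*B)⁻¹BᵀP*A. Let K ∈ ℝ^{m×n} and let X ∈ ℝ^{n×n} be symmetric and satisfy the discrete-time Lyapunov equation (A+BK)X(A+BK)ᵀ − X + W = 0. Then the completion-of-squares identity holds: trace((Q + KᵀRK)X) = trace(P*W) + trace((K−K*)ᵀ(R + BᵀP*B)(K−K*)X). In particular, if X is positive semidefinite, then trace((Q+KᵀRK)X) − trace(P*W) ≥ trace(R(K−K*)X(K−K*)ᵀ) ≥ 0. -/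
/-!
With `F = A + B K` and `S = R + Bᵀ P* B`, the Riccati equation is exactly what makes
`Q + Kᵀ R K - (P* - Fᵀ P* F)` the perfect square `(K - K*)ᵀ S (K - K*)`. Pairing with `X`
and cycling the trace, the Lyapunov equation turns `trace ((P* - Fᵀ P* F) X)` into
`trace (P* W)`. For the bound, split `S = R + Bᵀ P* B`: the second part contributes a
nonnegative trace, since the trace of a product of positive semidefinite matrices is
nonnegative.
-/

open Matrix

namespace Matrix

open scoped ComplexOrder MatrixOrder in
theorem PosSemidef.trace_mul_nonneg {n 𝕜 : Type*} [Fintype n] [RCLike 𝕜]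
    {M N : Matrix n n 𝕜} (hM : M.PosSemidef) (hN : N.PosSemidef) : 0 ≤ (M * N).trace := by
  classical
  obtain ⟨C, rfl⟩ := CStarAlgebra.nonneg_iff_eq_star_mul_self.mp hN.nonneg
  rw [star_eq_conjTranspose, ← Matrix.mul_assoc, trace_mul_cycle]
  exact (hM.mul_mul_conjTranspose_same C).trace_nonneg

variable {ι κ 𝕜 : Type*} [Fintype ι] [Fintype κ] [CommRing 𝕜]

theorem trace_mul_eq_of_lyapunov {F X W : Matrix ι ι 𝕜} (P : Matrix ι ι 𝕜)
    (h : F * X * Fᵀ - X + W = 0) : ((P - Fᵀ * P * F) * X).trace = (P * W).trace := by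
  have hW : W = X - F * X * Fᵀ := by rw [← sub_eq_zero, ← h]; abel
  have hcyc : (Fᵀ * P * F * X).trace = (P * (F * X * Fᵀ)).trace := by
    rw [Matrix.mul_assoc, Matrix.mul_assoc, trace_mul_comm]
    simp only [Matrix.mul_assoc]
  rw [hW, Matrix.sub_mul, Matrix.mul_sub, trace_sub, trace_sub, hcyc]

variable [DecidableEq κ]

theorem riccati_completion_of_squares {A P Q : Matrix ι ι 𝕜} {B : Matrix ι κ 𝕜}
    {R : Matrix κ κ 𝕜} (K : Matrix κ ι 𝕜) {K' : Matrix κ ι 𝕜}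
    (hP : P.IsSymm) (hR : R.IsSymm) (hS : IsUnit (R + Bᵀ * P * B))
    (hRic : P = Aᵀ * P * A + Q - Aᵀ * P * B * (R + Bᵀ * P * B)⁻¹ * Bᵀ * P * A)
    (hK' : K' = -((R + Bᵀ * P * B)⁻¹ * Bᵀ * P * A)) :
    Q + Kᵀ * R * K =
      P - (A + B * K)ᵀ * P * (A + B * K) + (K - K')ᵀ * (R + Bᵀ * P * B) * (K - K') := by
  set S := R + Bᵀ * P * B
  set G := Bᵀ * P * A
  have hSsymm : Sᵀ = S := by simp [S, transpose_mul, hP.eq, hR.eq, Matrix.mul_assoc]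
  have hGt : Gᵀ = Aᵀ * P * B := by simp [G, transpose_mul, hP.eq, Matrix.mul_assoc]
  have hK'G : K' = -(S⁻¹ * G) := by simp only [hK', G, Matrix.mul_assoc]
  have hSK : S * K' = -G := by
    rw [hK'G, Matrix.mul_neg, ← Matrix.mul_assoc,
      mul_nonsing_inv _ ((isUnit_iff_isUnit_det S).mp hS), Matrix.one_mul]
  have hKS : K'ᵀ * S = -Gᵀ := by rw [← hSsymm, ← transpose_mul, hSK, transpose_neg]
  have hRic' : P = Aᵀ * P * A + Q + Gᵀ * K' := by
    refine hRic.trans ?_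
    rw [hK'G, hGt]
    simp only [G, Matrix.mul_neg, Matrix.mul_assoc, sub_eq_add_neg]
  have hsq : (K - K')ᵀ * S * (K - K') = Kᵀ * S * K + Kᵀ * G + Gᵀ * K - Gᵀ * K' := by
    rw [transpose_sub, Matrix.sub_mul, Matrix.sub_mul, Matrix.mul_sub, Matrix.mul_sub, hKS,
      Matrix.mul_assoc Kᵀ S K', hSK]
    simp only [Matrix.mul_neg, Matrix.neg_mul]
    abel
  rw [hsq]
  nth_rewrite 1 [hRic']
  simp only [S, G, hP.eq, transpose_transpose, transpose_add, transpose_mul, Matrix.add_mul,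
    Matrix.mul_add, Matrix.mul_assoc]
  abel

end Matrix

theorem stmt_5_general {n m : ℕ}
    (A : Matrix (Fin n) (Fin n) ℝ) (B : Matrix (Fin n) (Fin m) ℝ)
    (Q W Pstar X : Matrix (Fin n) (Fin n) ℝ)
    (R : Matrix (Fin m) (Fin m) ℝ)
    (K Kstar : Matrix (Fin m) (Fin n) ℝ)
    (hR : R.PosDef)
    (hPs : Pstar.PosSemidef)
    (hUnit : IsUnit (R + Bᵀ * Pstar * B))
    (hRic : Pstar = Aᵀ * Pstar * A + Q -
      Aᵀ * Pstar * B * (R + Bᵀ * Pstar * B)⁻¹ * Bᵀ * Pstar * A)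
    (hKs : Kstar = -((R + Bᵀ * Pstar * B)⁻¹ * Bᵀ * Pstar * A))
    (hXEq : (A + B * K) * X * (A + B * K)ᵀ - X + W = 0) :
    Matrix.trace ((Q + Kᵀ * R * K) * X) =
        Matrix.trace (Pstar * W) +
          Matrix.trace ((K - Kstar)ᵀ * (R + Bᵀ * Pstar * B) * (K - Kstar) * X) ∧
      (X.PosSemidef →
        Matrix.trace (R * (K - Kstar) * X * (K - Kstar)ᵀ) ≤
            Matrix.trace ((Q + Kᵀ * R * K) * X) - Matrix.trace (Pstar * W) ∧
          0 ≤ Matrix.trace (R * (K - Kstar) * X * (K - Kstar)ᵀ)) := by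
  have identity : ((Q + Kᵀ * R * K) * X).trace = (Pstar * W).trace +
      ((K - Kstar)ᵀ * (R + Bᵀ * Pstar * B) * (K - Kstar) * X).trace := by
    rw [riccati_completion_of_squares K (isHermitian_iff_isSymm.mp hPs.isHermitian)
      (isHermitian_iff_isSymm.mp hR.isHermitian) hUnit hRic hKs, Matrix.add_mul, trace_add,
      trace_mul_eq_of_lyapunov Pstar hXEq]
  refine ⟨identity, fun hXp => ?_⟩
  set Δ := K - Kstar
  have hRterm : (Δᵀ * R * Δ * X).trace = (R * Δ * X * Δᵀ).trace := by
    rw [Matrix.mul_assoc, Matrix.mul_assoc, trace_mul_comm]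
    simp only [Matrix.mul_assoc]
  have hBPBterm : 0 ≤ (Δᵀ * (Bᵀ * Pstar * B) * Δ * X).trace := by
    simpa only [conjTranspose_eq_transpose_of_trivial] using
      ((hPs.conjTranspose_mul_mul_same B).conjTranspose_mul_mul_same Δ).trace_mul_nonneg hXp
  have hRnonneg : 0 ≤ (R * Δ * X * Δᵀ).trace := by
    simpa only [conjTranspose_eq_transpose_of_trivial, Matrix.mul_assoc] using
      hR.posSemidef.trace_mul_nonneg (hXp.mul_mul_conjTranspose_same Δ)
  rw [identity, add_sub_cancel_left, Matrix.mul_add, Matrix.add_mul, Matrix.add_mul, trace_add,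
    hRterm]
  exact ⟨le_add_of_nonneg_right hBPBterm, hRnonneg⟩

/-- Completion-of-squares identity for the discrete-time LQR, and the resulting lower
bound on the optimality gap. -/
theorem stmt_5 {n m : ℕ}
    (A : Matrix (Fin n) (Fin n) ℝ) (B : Matrix (Fin n) (Fin m) ℝ)
    (Q W Pstar X : Matrix (Fin n) (Fin n) ℝ)
    (R : Matrix (Fin m) (Fin m) ℝ)
    (K Kstar : Matrix (Fin m) (Fin n) ℝ)
    (hQ : Q.IsHermitian) (hR : R.PosDef) (hW : W.IsHermitian)
    (hPs : Pstar.PosSemidef)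
    (hUnit : IsUnit (R + Bᵀ * Pstar * B))
    (hRic : Pstar = Aᵀ * Pstar * A + Q -
      Aᵀ * Pstar * B * (R + Bᵀ * Pstar * B)⁻¹ * Bᵀ * Pstar * A)
    (hKs : Kstar = -((R + Bᵀ * Pstar * B)⁻¹ * Bᵀ * Pstar * A))
    (hX : X.IsHermitian)
    (hXEq : (A + B * K) * X * (A + B * K)ᵀ - X + W = 0) :
    Matrix.trace ((Q + Kᵀ * R * K) * X) =
        Matrix.trace (Pstar * W) +
          Matrix.trace ((K - Kstar)ᵀ * (R + Bᵀ * Pstar * B) * (K - Kstar) * X) ∧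
      (X.PosSemidef →
        Matrix.trace (R * (K - Kstar) * X * (K - Kstar)ᵀ) ≤
            Matrix.trace ((Q + Kᵀ * R * K) * X) - Matrix.trace (Pstar * W) ∧
          0 ≤ Matrix.trace (R * (K - Kstar) * X * (K - Kstar)ᵀ)) :=
  stmt_5_general A B Q W Pstar X R K Kstar hR hPs hUnit hRic hKs hXEq
end

section
/- Let M ∈ ℝ^{n×n}, let W ∈ ℝ^{n×n} be symmetric positive semidefinite with positive semidefinite square root W^{1/2}, and suppose the pair (M, W^{1/2}) is controllable, i.e., the block matrix [W^{1/2} | M·W^{1/2} | ⋯ | M^{n−1}·W^{1/2}] ∈ ℝ^{n×n²} has rank n. Let X ∈ ℝ^{n×n} be symmetric and satisfy the discrete-time Lyapunov equation M X Mᵀ − X + W = 0. Then M is Schur stable if and only if X is positive definite. -/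
open Matrix

noncomputable section

/-- A real square matrix is Schur stable if every complex eigenvalue has modulus < 1. -/
def IsSchur {n : ℕ} (M : Matrix (Fin n) (Fin n) ℝ) : Prop :=
  ∀ μ ∈ spectrum ℂ (M.map Complex.ofReal), ‖μ‖ < 1

/-- Controllability matrix `[C | M·C | ⋯ | M^{n−1}·C]` of the pair `(M, C)`. -/
def ctrbMatrix {n : ℕ} (M C : Matrix (Fin n) (Fin n) ℝ) :
    Matrix (Fin n) (Fin n × Fin n) ℝ :=
  Matrix.of fun i p => (M ^ (p.1 : ℕ) * C) i p.2

/-! Write `W = S Sᵀ` with `S = W^{1/2}`. Iterating the Lyapunov equation gives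
`X = ∑_{k<N} Mᵏ W (Mᵀ)ᵏ + Mᴺ X (Mᵀ)ᴺ`. If `M` is Schur stable, Gelfand's formula gives `Mᴺ → 0`,
so `vᵀ X v = ∑ₖ ‖vᵀ Mᵏ S‖²`, and controllability makes some term nonzero when `v ≠ 0`.
Conversely, if `w M = μ w` with `w ≠ 0` and `|μ| ≥ 1`, the equation gives
`(1 - |μ|²) · w X w* = ‖w S‖²`; as `w X w* ≥ 0` this forces `w S = 0`, hence `w Mᵏ S = μᵏ w S = 0`
for every `k`, contradicting controllability. -/

open Filter Topology
open scoped NNReal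

section BanachAlgebra

variable {A : Type*} [NormedRing A] [NormedAlgebra ℂ A] [CompleteSpace A]

theorem tendsto_pow_atTop_nhds_zero_of_spectralRadius_lt_one {a : A}
    (ha : spectralRadius ℂ a < 1) : Tendsto (a ^ ·) atTop (𝓝 0) := by
  obtain ⟨c, hac, hc1⟩ := exists_between ha
  lift c to ℝ≥0 using (hc1.trans ENNReal.one_lt_top).ne
  have hle : ∀ᶠ k : ℕ in atTop, ‖a ^ k‖₊ ≤ c ^ k := by
    filter_upwards [(spectrum.pow_nnnorm_pow_one_div_tendsto_nhds_spectralRadius a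
      ).eventually_lt_const hac, eventually_gt_atTop 0] with k hk hk0
    rw [one_div, ENNReal.rpow_inv_lt_iff (by positivity), ENNReal.rpow_natCast,
      ← ENNReal.coe_pow, ENNReal.coe_lt_coe] at hk
    exact hk.le
  refine squeeze_zero_norm' (hle.mono fun k hk => NNReal.coe_le_coe.2 hk) ?_
  exact tendsto_pow_atTop_nhds_zero_of_lt_one c.coe_nonneg (by exact_mod_cast hc1)

theorem tendsto_pow_atTop_nhds_zero_of_forall_norm_lt_one {a : A}
    (ha : ∀ z ∈ spectrum ℂ a, ‖z‖ < 1) : Tendsto (a ^ ·) atTop (𝓝 0) := by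
  nontriviality A
  exact tendsto_pow_atTop_nhds_zero_of_spectralRadius_lt_one
    (spectrum.spectralRadius_lt_of_forall_lt a fun z hz => by exact_mod_cast ha z hz)

end BanachAlgebra

section Complexification

variable {ι κ τ : Type*}

theorem Matrix.re_vecMul_map_ofReal [Fintype ι] (w : ι → ℂ) (C : Matrix ι κ ℝ) (j : κ) :
    ((w ᵥ* C.map Complex.ofReal) j).re = ((fun i => (w i).re) ᵥ* C) j := by
  simp [vecMul, dotProduct, Complex.re_sum]

theorem Matrix.im_vecMul_map_ofReal [Fintype ι] (w : ι → ℂ) (C : Matrix ι κ ℝ) (j : κ) :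
    ((w ᵥ* C.map Complex.ofReal) j).im = ((fun i => (w i).im) ᵥ* C) j := by
  simp [vecMul, dotProduct, Complex.im_sum]

theorem Matrix.eq_zero_of_forall_vecMul_map_ofReal_eq_zero [Fintype ι] {C : τ → Matrix ι κ ℝ}
    (hC : ∀ v, (∀ k, v ᵥ* C k = 0) → v = 0) {w : ι → ℂ}
    (hw : ∀ k, w ᵥ* (C k).map Complex.ofReal = 0) : w = 0 := by
  have hre := hC (fun i => (w i).re) fun k => funext fun j => by
    rw [← re_vecMul_map_ofReal, hw k, Pi.zero_apply, Pi.zero_apply, Complex.zero_re]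
  have him := hC (fun i => (w i).im) fun k => funext fun j => by
    rw [← im_vecMul_map_ofReal, hw k, Pi.zero_apply, Pi.zero_apply, Complex.zero_im]
  exact funext fun i => Complex.ext (congrFun hre i) (congrFun him i)

theorem Matrix.map_ofReal_mul [Fintype ι] (A : Matrix τ ι ℝ) (B : Matrix ι κ ℝ) :
    (A * B).map Complex.ofReal = A.map Complex.ofReal * B.map Complex.ofReal :=
  Matrix.map_mul (f := Complex.ofRealHom)

theorem Matrix.map_ofReal_pow [Fintype ι] [DecidableEq ι] (A : Matrix ι ι ℝ) (k : ℕ) :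
    (A ^ k).map Complex.ofReal = A.map Complex.ofReal ^ k :=
  Matrix.map_pow A Complex.ofRealHom k

theorem Matrix.transpose_map_ofReal (A : Matrix ι κ ℝ) :
    Aᵀ.map Complex.ofReal = (A.map Complex.ofReal)ᴴ := by
  rw [← conjTranspose_eq_transpose_of_trivial,
    conjTranspose_map _ fun x => (Complex.conj_ofReal x).symm]

open scoped MatrixOrder ComplexOrder in
theorem Matrix.PosSemidef.map_ofReal [Fintype ι] [DecidableEq ι] {X : Matrix ι ι ℝ}
    (hX : X.PosSemidef) : (X.map Complex.ofReal).PosSemidef := by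
  obtain ⟨B, rfl⟩ := CStarAlgebra.nonneg_iff_eq_star_mul_self.mp hX.nonneg
  rw [star_eq_conjTranspose, map_ofReal_mul,
    conjTranspose_map _ fun x => (Complex.conj_ofReal x).symm]
  exact posSemidef_conjTranspose_mul_self _

end Complexification

theorem tendsto_pow_atTop_nhds_zero_of_isSchur {n : ℕ} {M : Matrix (Fin n) (Fin n) ℝ}
    (hM : IsSchur M) : Tendsto (M ^ ·) atTop (𝓝 0) := by
  -- The `ℓ∞` operator norm induces the product topology definitionally.
  let := Matrix.linftyOpNormedRing (n := Fin n) (α := ℂ)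
  let := Matrix.linftyOpNormedAlgebra (R := ℂ) (n := Fin n) (α := ℂ)
  have hc : Tendsto (fun k => (M ^ k).map Complex.ofReal) atTop (𝓝 0) :=
    (tendsto_pow_atTop_nhds_zero_of_forall_norm_lt_one hM).congr fun k =>
      (map_ofReal_pow M k).symm
  simpa [Function.comp_def] using
    ((continuous_id.matrix_map Complex.continuous_re).tendsto 0).comp hc

section Lyapunov

variable {R : Type*} [Ring R] {a b w x : R}

theorem eq_sum_pow_mul_mul_pow_add (h : x = a * x * b + w) (N : ℕ) :
    x = ∑ k ∈ Finset.range N, a ^ k * w * b ^ k + a ^ N * x * b ^ N := by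
  induction N with
  | zero => simp
  | succ N ih =>
    have hstep : a ^ N * x * b ^ N = a ^ N * w * b ^ N + a ^ (N + 1) * x * b ^ (N + 1) := by
      conv_lhs => rw [h]
      rw [pow_succ, pow_succ']
      noncomm_ring
    rw [Finset.sum_range_succ, add_assoc, ← hstep, ← ih]

theorem tendsto_sum_pow_mul_mul_pow [TopologicalSpace R] [IsTopologicalRing R]
    (h : x = a * x * b + w) (ha : Tendsto (a ^ ·) atTop (𝓝 0))
    (hb : Tendsto (b ^ ·) atTop (𝓝 0)) :
    Tendsto (fun N => ∑ k ∈ Finset.range N, a ^ k * w * b ^ k) atTop (𝓝 x) := by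
  have hrem : Tendsto (fun N => a ^ N * x * b ^ N) atTop (𝓝 0) := by
    simpa using (ha.mul_const x).mul hb
  simpa using (tendsto_const_nhds (x := x)).sub hrem |>.congr
    fun N => sub_eq_of_eq_add (eq_sum_pow_mul_mul_pow_add h N)

end Lyapunov

theorem Matrix.dotProduct_mul_transpose_mulVec {ι κ : Type*} [Fintype ι] [Fintype κ]
    (B : Matrix ι κ ℝ) (v : ι → ℝ) : v ⬝ᵥ ((B * Bᵀ) *ᵥ v) = (v ᵥ* B) ⬝ᵥ (v ᵥ* B) := by
  rw [← mulVec_mulVec, dotProduct_mulVec, mulVec_transpose]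

theorem Matrix.posDef_of_lyapunov {ι κ : Type*} [Fintype ι] [DecidableEq ι] [Fintype κ]
    {A X : Matrix ι ι ℝ} {S : Matrix ι κ ℝ} (hX : X.IsHermitian)
    (hXeq : X = A * X * Aᵀ + S * Sᵀ) (hA : Tendsto (A ^ ·) atTop (𝓝 0))
    (hS : ∀ v, (∀ k : ℕ, v ᵥ* (A ^ k * S) = 0) → v = 0) : X.PosDef := by
  refine posDef_iff_dotProduct_mulVec.mpr ⟨hX, fun v hv => ?_⟩
  rw [star_trivial]
  set u : ℕ → κ → ℝ := fun k => v ᵥ* (A ^ k * S)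
  have hu_nonneg : ∀ k, 0 ≤ u k ⬝ᵥ u k := fun k => by
    simpa using dotProduct_star_self_nonneg (u k)
  have hterm : ∀ k, v ⬝ᵥ ((A ^ k * (S * Sᵀ) * Aᵀ ^ k) *ᵥ v) = u k ⬝ᵥ u k := fun k => by
    rw [← dotProduct_mul_transpose_mulVec, transpose_mul, transpose_pow, Matrix.mul_assoc,
      Matrix.mul_assoc, Matrix.mul_assoc]
  have hAT : Tendsto (Aᵀ ^ ·) atTop (𝓝 0) := by
    simpa [Function.comp_def, transpose_pow] using
      (continuous_id.matrix_transpose.tendsto 0).comp hA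
  have hsum : HasSum (fun k => u k ⬝ᵥ u k) (v ⬝ᵥ (X *ᵥ v)) := by
    rw [hasSum_iff_tendsto_nat_of_nonneg hu_nonneg]
    have hQ : Continuous fun Y : Matrix ι ι ℝ => v ⬝ᵥ (Y *ᵥ v) :=
      continuous_const.dotProduct (continuous_id.matrix_mulVec continuous_const)
    simpa only [Function.comp_def, sum_mulVec, dotProduct_sum, hterm] using
      (hQ.tendsto X).comp (tendsto_sum_pow_mul_mul_pow hXeq hA hAT)
  obtain ⟨k, hk⟩ : ∃ k, u k ≠ 0 := by
    by_contra! h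
    exact hv (hS v h)
  exact hasSum_lt (f := 0) hu_nonneg (by simpa using dotProduct_star_self_pos_iff.2 hk)
    hasSum_zero hsum

theorem Matrix.exists_vecMul_eq_smul_of_mem_spectrum {K ι : Type*} [Field K] [Fintype ι]
    [DecidableEq ι] {A : Matrix ι ι K} {μ : K} (h : μ ∈ spectrum K A) :
    ∃ w ≠ 0, w ᵥ* A = μ • w := by
  rw [spectrum.mem_iff, isUnit_iff_isUnit_det, isUnit_iff_ne_zero, not_not] at h
  obtain ⟨w, hw0, hw⟩ := exists_vecMul_eq_zero_iff.mpr h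
  refine ⟨w, hw0, (sub_eq_zero.mp ?_).symm⟩
  rwa [vecMul_sub, Algebra.algebraMap_eq_smul_one, vecMul_smul, vecMul_one] at hw

theorem Matrix.vecMul_pow_of_vecMul_eq_smul {R ι : Type*} [CommSemiring R] [Fintype ι]
    [DecidableEq ι] {A : Matrix ι ι R} {μ : R} {w : ι → R} (hw : w ᵥ* A = μ • w) (k : ℕ) :
    w ᵥ* A ^ k = μ ^ k • w := by
  induction k with
  | zero => simp
  | succ k ih => rw [pow_succ, ← vecMul_vecMul, ih, smul_vecMul, hw, smul_smul, pow_succ]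

open scoped ComplexOrder in
theorem Matrix.vecMul_pow_mul_eq_zero_of_lyapunov {𝕜 ι κ : Type*} [RCLike 𝕜] [Fintype ι]
    [DecidableEq ι] [Fintype κ] {A X : Matrix ι ι 𝕜} {S : Matrix ι κ 𝕜} (hX : X.PosSemidef)
    (hXeq : X = A * X * Aᴴ + S * Sᴴ) {μ : 𝕜} (hμ : 1 ≤ ‖μ‖) {w : ι → 𝕜}
    (hw : w ᵥ* A = μ • w) (k : ℕ) : w ᵥ* (A ^ k * S) = 0 := by
  have heq : w ⬝ᵥ (X *ᵥ star w) =
      (‖μ‖ ^ 2 : 𝕜) * (w ⬝ᵥ (X *ᵥ star w)) + (w ᵥ* S) ⬝ᵥ star (w ᵥ* S) := by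
    conv_lhs => rw [hXeq]
    rw [add_mulVec, dotProduct_add, ← mulVec_mulVec, ← mulVec_mulVec, ← mulVec_mulVec,
      ← star_vecMul, ← star_vecMul, dotProduct_mulVec w A, dotProduct_mulVec w S, hw, star_smul,
      mulVec_smul, dotProduct_smul, smul_dotProduct, ← RCLike.mul_conj]
    simp only [smul_eq_mul, RCLike.star_def]
    ring
  set q := w ⬝ᵥ (X *ᵥ star w)
  set r := (w ᵥ* S) ⬝ᵥ star (w ᵥ* S)
  have hq : 0 ≤ q := by simpa using hX.dotProduct_mulVec_nonneg (star w)
  have hr : r ≤ 0 := by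
    have hμ' : ((1 - ‖μ‖ ^ 2 : ℝ) : 𝕜) ≤ 0 := by
      rw [← RCLike.ofReal_zero, RCLike.ofReal_le_ofReal]
      nlinarith
    calc r = ((1 - ‖μ‖ ^ 2 : ℝ) : 𝕜) * q := by push_cast; linear_combination -heq
      _ ≤ 0 := mul_nonpos_of_nonpos_of_nonneg hμ' hq
  have hwS : w ᵥ* S = 0 :=
    dotProduct_self_star_eq_zero.1 (le_antisymm hr (dotProduct_self_star_nonneg _))
  rw [← vecMul_vecMul, vecMul_pow_of_vecMul_eq_smul hw, smul_vecMul, hwS, smul_zero]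

theorem isSchur_of_lyapunov {n : ℕ} {κ : Type*} [Fintype κ] {M X : Matrix (Fin n) (Fin n) ℝ}
    {S : Matrix (Fin n) κ ℝ} (hX : X.PosSemidef) (hXeq : X = M * X * Mᵀ + S * Sᵀ)
    (hS : ∀ v, (∀ k : ℕ, v ᵥ* (M ^ k * S) = 0) → v = 0) : IsSchur M := by
  intro μ hμ
  by_contra! hμ1
  obtain ⟨w, hw0, hw⟩ := exists_vecMul_eq_smul_of_mem_spectrum hμ
  have hXeqC : X.map Complex.ofReal = M.map Complex.ofReal * X.map Complex.ofReal *
      (M.map Complex.ofReal)ᴴ + S.map Complex.ofReal * (S.map Complex.ofReal)ᴴ := by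
    conv_lhs => rw [hXeq]
    rw [Matrix.map_add _ Complex.ofReal_add, map_ofReal_mul, map_ofReal_mul, map_ofReal_mul,
      transpose_map_ofReal, transpose_map_ofReal]
  refine hw0 (eq_zero_of_forall_vecMul_map_ofReal_eq_zero hS fun k => ?_)
  rw [map_ofReal_mul, map_ofReal_pow]
  exact vecMul_pow_mul_eq_zero_of_lyapunov hX.map_ofReal hXeqC hμ1 hw k

theorem eq_zero_of_forall_vecMul_pow_mul_eq_zero {n : ℕ} {M C : Matrix (Fin n) (Fin n) ℝ}
    (hC : (ctrbMatrix M C).rank = n) {v : Fin n → ℝ}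
    (hv : ∀ k : Fin n, v ᵥ* (M ^ (k : ℕ) * C) = 0) : v = 0 := by
  have hrows : LinearIndependent ℝ (ctrbMatrix M C).row := by
    rw [linearIndependent_iff_card_eq_finrank_span, Fintype.card_fin, Set.finrank,
      ← rank_eq_finrank_span_row, hC]
  refine vecMul_injective_iff.mpr hrows (?_ : v ᵥ* _ = 0 ᵥ* _)
  rw [zero_vecMul]
  funext p
  exact congrFun (hv p.1) p.2

theorem stmt_11_general {n : ℕ}
    (M W Wsqrt X : Matrix (Fin n) (Fin n) ℝ)
    (hWs : Wsqrt.PosSemidef) (hWsq : Wsqrt * Wsqrt = W)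
    (hCtrb : (ctrbMatrix M Wsqrt).rank = n)
    (hX : X.IsHermitian)
    (hXEq : M * X * Mᵀ - X + W = 0) :
    IsSchur M ↔ X.PosDef := by
  have hLyap : X = M * X * Mᵀ + Wsqrt * Wsqrtᵀ := by
    rw [← conjTranspose_eq_transpose_of_trivial Wsqrt, hWs.isHermitian.eq, hWsq]
    exact (eq_of_sub_eq_zero (by rw [← hXEq]; abel)).symm
  have hker : ∀ v, (∀ k : ℕ, v ᵥ* (M ^ k * Wsqrt) = 0) → v = 0 :=
    fun v hv => eq_zero_of_forall_vecMul_pow_mul_eq_zero hCtrb fun k => hv k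
  exact ⟨fun hM => posDef_of_lyapunov hX hLyap (tendsto_pow_atTop_nhds_zero_of_isSchur hM) hker,
    fun hXpos => isSchur_of_lyapunov hXpos.posSemidef hLyap hker⟩

/-- For a controllable pair `(M, W^{1/2})`, the discrete-time Lyapunov solution is
positive definite iff `M` is Schur stable. -/
theorem stmt_11 {n : ℕ}
    (M W Wsqrt X : Matrix (Fin n) (Fin n) ℝ)
    (hW : W.PosSemidef) (hWs : Wsqrt.PosSemidef) (hWsq : Wsqrt * Wsqrt = W)
    (hCtrb : (ctrbMatrix M Wsqrt).rank = n)
    (hX : X.IsHermitian)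
    (hXEq : M * X * Mᵀ - X + W = 0) :
    IsSchur M ↔ X.PosDef :=
  stmt_11_general M W Wsqrt X hWs hWsq hCtrb hX hXEq
end
end

section
/- Let Q₀ ∈ ℝ^{n×n} be symmetric, let R ∈ ℝ^{m×m} be symmetric positive semidefinite, and let L ∈ ℝ^{m×n}. Then the set D = {(Y, X) ∈ ℝ^{m×n} × ℝ^{n×n} : X symmetric positive definite} is convex, and the function f(Y, X) = trace(Q₀X) + trace(R·Y X⁻¹ Yᵀ) + 2·trace(LᵀY) is convex on D, i.e., for all (Y₁,X₁), (Y₂,X₂) ∈ D and all θ ∈ [0,1], f(θY₁ + (1−θ)Y₂, θX₁ + (1−θ)X₂) ≤ θ·f(Y₁,X₁) + (1−θ)·f(Y₂,X₂). -/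
open Matrix

noncomputable section

/-- Cost of the convex reformulation:
`f(Y, X) = trace(Q₀X) + trace(R·Y X⁻¹ Yᵀ) + 2·trace(LᵀY)`. -/
def cost {n m : ℕ} (Q0 : Matrix (Fin n) (Fin n) ℝ) (R : Matrix (Fin m) (Fin m) ℝ)
    (L : Matrix (Fin m) (Fin n) ℝ) (Y : Matrix (Fin m) (Fin n) ℝ)
    (X : Matrix (Fin n) (Fin n) ℝ) : ℝ :=
  Matrix.trace (Q0 * X) + Matrix.trace (R * (Y * X⁻¹ * Yᵀ)) +
    2 * Matrix.trace (Lᵀ * Y)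

/-!
The only nonlinear term is `trace (R * (Y * X⁻¹ * Yᵀ))`. By the Schur complement criterion,
`Y * X⁻¹ * Yᴴ` is the smallest `S` (in the Loewner order) making the block matrix
`[S, Y; Yᴴ, X]` positive semidefinite. Such block matrices form a convex cone, so
`(Y, X) ↦ Y * X⁻¹ * Yᴴ` is jointly convex in the Loewner order, and pairing with `R ⪰ 0`
under the trace is monotone.
-/

open scoped ComplexOrder MatrixOrder

namespace Matrix

variable {𝕜 m n : Type*} [RCLike 𝕜]

theorem convex_setOf_posDef : Convex ℝ {A : Matrix n n 𝕜 | A.PosDef} := by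
  intro A hA B hB a b ha hb hab
  rcases ha.eq_or_lt with rfl | ha
  · simpa [show b = 1 by linarith] using hB
  · exact (hA.smul ha).add_posSemidef (hB.posSemidef.smul hb)

variable [Fintype n]

theorem PosSemidef.trace_mul_nonneg_s17 {A B : Matrix n n 𝕜} (hA : A.PosSemidef)
    (hB : B.PosSemidef) : 0 ≤ (A * B).trace := by
  classical
  obtain ⟨C, rfl⟩ := CStarAlgebra.nonneg_iff_eq_star_mul_self.mp hB.nonneg
  rw [← Matrix.mul_assoc, trace_mul_comm, ← Matrix.mul_assoc]
  exact (hA.mul_mul_conjTranspose_same C).trace_nonneg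

theorem PosSemidef.trace_mul_le_trace_mul {A B C : Matrix n n 𝕜} (hA : A.PosSemidef)
    (hBC : B ≤ C) : (A * B).trace ≤ (A * C).trace := by
  have := hA.trace_mul_nonneg_s17 (Matrix.le_iff.mp hBC)
  rwa [Matrix.mul_sub, trace_sub, sub_nonneg] at this

variable [Fintype m] [DecidableEq n]

theorem posSemidef_fromBlocks_mul_inv_mul_conjTranspose (Y : Matrix m n 𝕜)
    {X : Matrix n n 𝕜} (hX : X.PosDef) : (fromBlocks (Y * X⁻¹ * Yᴴ) Y Yᴴ X).PosSemidef := by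
  have := hX.isUnit.invertible
  rw [hX.fromBlocks₂₂, sub_self]
  exact .zero

theorem mul_inv_mul_conjTranspose_convexCombo_le {Y₁ Y₂ : Matrix m n 𝕜}
    {X₁ X₂ : Matrix n n 𝕜} (hX₁ : X₁.PosDef) (hX₂ : X₂.PosDef) {a b : ℝ} (ha : 0 ≤ a)
    (hb : 0 ≤ b) (hab : a + b = 1) :
    (a • Y₁ + b • Y₂) * (a • X₁ + b • X₂)⁻¹ * (a • Y₁ + b • Y₂)ᴴ ≤
      a • (Y₁ * X₁⁻¹ * Y₁ᴴ) + b • (Y₂ * X₂⁻¹ * Y₂ᴴ) := by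
  have hX : (a • X₁ + b • X₂).PosDef := convex_setOf_posDef hX₁ hX₂ ha hb hab
  have := hX.isUnit.invertible
  have hblocks := ((posSemidef_fromBlocks_mul_inv_mul_conjTranspose Y₁ hX₁).smul ha).add
    ((posSemidef_fromBlocks_mul_inv_mul_conjTranspose Y₂ hX₂).smul hb)
  rw [Matrix.le_iff, ← hX.fromBlocks₂₂]
  simpa only [fromBlocks_smul, fromBlocks_add, conjTranspose_add, conjTranspose_smul,
    star_trivial] using hblocks

end Matrix

theorem stmt_17_general {n m : ℕ}
    (Q0 : Matrix (Fin n) (Fin n) ℝ) (R : Matrix (Fin m) (Fin m) ℝ)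
    (L : Matrix (Fin m) (Fin n) ℝ)
    (hR : R.PosSemidef) :
    Convex ℝ {p : Matrix (Fin m) (Fin n) ℝ × Matrix (Fin n) (Fin n) ℝ | p.2.PosDef} ∧
      ∀ Y₁ X₁ Y₂ X₂, X₁.PosDef → X₂.PosDef → ∀ θ : ℝ, 0 ≤ θ → θ ≤ 1 →
        cost Q0 R L (θ • Y₁ + (1 - θ) • Y₂) (θ • X₁ + (1 - θ) • X₂) ≤
          θ * cost Q0 R L Y₁ X₁ + (1 - θ) * cost Q0 R L Y₂ X₂ := by
  refine ⟨fun _ hp _ hq _ _ ha hb hab => convex_setOf_posDef hp hq ha hb hab, ?_⟩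
  intro Y₁ X₁ Y₂ X₂ hX₁ hX₂ θ h0 h1
  have hquad := hR.trace_mul_le_trace_mul
    (mul_inv_mul_conjTranspose_convexCombo_le (Y₁ := Y₁) (Y₂ := Y₂) hX₁ hX₂ h0
      (sub_nonneg.mpr h1) (add_sub_cancel θ 1))
  simp only [conjTranspose_eq_transpose_of_trivial, Matrix.mul_add, Matrix.mul_smul,
    trace_add, trace_smul, smul_eq_mul] at hquad
  simp only [cost, Matrix.mul_add, Matrix.mul_smul, trace_add, trace_smul, smul_eq_mul]
  linarith

/-- The domain `D = {(Y, X) : X ≻ 0}` is convex, and the cost of the convex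
reformulation of LQR is convex on `D`. -/
theorem stmt_17 {n m : ℕ}
    (Q0 : Matrix (Fin n) (Fin n) ℝ) (R : Matrix (Fin m) (Fin m) ℝ)
    (L : Matrix (Fin m) (Fin n) ℝ)
    (hQ0 : Q0.IsHermitian) (hR : R.PosSemidef) :
    Convex ℝ {p : Matrix (Fin m) (Fin n) ℝ × Matrix (Fin n) (Fin n) ℝ | p.2.PosDef} ∧
      ∀ Y₁ X₁ Y₂ X₂, X₁.PosDef → X₂.PosDef → ∀ θ : ℝ, 0 ≤ θ → θ ≤ 1 →
        cost Q0 R L (θ • Y₁ + (1 - θ) • Y₂) (θ • X₁ + (1 - θ) • X₂) ≤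
          θ * cost Q0 R L Y₁ X₁ + (1 - θ) * cost Q0 R L Y₂ X₂ :=
  stmt_17_general Q0 R L hR
end
end
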